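/- arXiv:1308.0863 — 2 statements merged into one kernel-verified Lean document; each statement's English description precedes it below -/
import Mathlib

section
/- The r-Whitney numbers of the second kind are special values of the partial r-Bell polynomials: W_{m,r}(n,k) = B^{(r)}_{n+r,k+r}(m^{l-1} ; 1), i.e., taking a_l = m^{l-1} and b_l = 1 for all l ≥ 1. Equivalently, as formal power series, (1/k!)((e^{mt}-1)/m)^k e^{rt} = Σ_{n≥k} B^{(r)}_{n+r,k+r}(m^{l-1};1) t^n/n!. -/
/-!
The partial `r`-Bell polynomials have the exponential generating function
`(1/k!) (Σ_{l≥1} a_l t^l/l!)^k (Σ_{l≥1} b_l t^{l-1}/(l-1)!)^r`: after pulling `t^k` out of the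
first factor, the coefficient of `t^n` is the coefficient of `t^{n-k}` in a product of `k + r`
power series, i.e. a sum over `(k+r)`-tuples with sum `n - k`, which is the defining formula.
For `a_l = m^{l-1}` and `b_l = 1` the two series are `(e^{mt}-1)/m` and `e^t`.
-/

open Finset

/-- The partial `r`-Bell polynomial `B^{(r)}_{n+r,k+r}(a;b)`, defined by the explicit
formula `(n!/k!) * Σ_{n_1+...+n_{k+r}=n-k} Π_{i=1}^{r} b_{n_i+1}/n_i! *
Π_{i=r+1}^{r+k} a_{n_i+1}/(n_i+1)!`, the sum over `(k+r)`-tuples of naturals. -/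
noncomputable def rBell {A : Type*} [CommRing A] [Algebra ℚ A]
    (r k n : ℕ) (a b : ℕ → A) : A :=
  ((n.factorial : ℚ) / (k.factorial : ℚ)) •
    ∑ f ∈ Finset.Nat.antidiagonalTuple (k + r) (n - k),
      ∏ i : Fin (k + r),
        if (i : ℕ) < r then (((f i).factorial : ℚ))⁻¹ • b (f i + 1)
        else ((((f i) + 1).factorial : ℚ))⁻¹ • a (f i + 1)

open PowerSeries Nat

theorem PowerSeries.coeff_prod_fin {R : Type*} [CommSemiring R] {k : ℕ}
    (f : Fin k → PowerSeries R) (n : ℕ) :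
    coeff n (∏ i, f i) = ∑ g ∈ Nat.antidiagonalTuple k n, ∏ i, coeff (g i) (f i) := by
  rw [coeff_prod, finsuppAntidiag, sum_map, ← piAntidiag_univ_fin_eq_antidiagonalTuple]
  exact sum_attach _ fun (g : Fin k → ℕ) => ∏ i, coeff (g i) (f i)

theorem Fin.prod_ite_val_lt {M : Type*} [CommMonoid M] (x y : M) (r k : ℕ) :
    ∏ i : Fin (k + r), (if (i : ℕ) < r then x else y) = y ^ k * x ^ r := by
  rw [Fin.prod_univ_eq_prod_range (fun i => if i < r then x else y), add_comm, prod_range_add,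
    mul_comm]
  congr 1
  · simp
  · exact (prod_congr rfl fun i hi => if_pos (mem_range.1 hi)).trans (by simp)

section Egf

variable {A : Type*} [CommRing A] [Algebra ℚ A]

noncomputable def egf (a : ℕ → A) : PowerSeries A :=
  PowerSeries.mk fun l => (l ! : ℚ)⁻¹ • a l

theorem exp_eq_egf_one : exp A = egf fun _ => 1 := by
  ext n
  simp [egf, coeff_exp, Algebra.smul_def]

theorem inv_smul_exp_pow_sub_one {m : ℕ} (hm : m ≠ 0) :
    (m : ℚ)⁻¹ • (exp A ^ m - 1) = egf (fun l => (m : A) ^ (l - 1)) - 1 := by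
  ext (_ | l)
  · simp [egf]
  · simp only [egf, exp_pow_eq_rescale_exp, coeff_smul, map_sub, coeff_rescale, coeff_exp,
      coeff_one, coeff_mk]
    simp only [Nat.add_one_ne_zero, if_false, sub_zero, Nat.add_sub_cancel, Algebra.smul_def,
      ← map_natCast (algebraMap ℚ A) m, ← map_pow, ← map_mul]
    congr 1
    field_simp
    ring

theorem egf_rBell (r k : ℕ) (a b : ℕ → A) :
    (k ! : ℚ)⁻¹ • ((egf a - C (a 0)) ^ k * egf (fun l => b (l + 1)) ^ r) =
      PowerSeries.mk fun n => if k ≤ n then (n ! : ℚ)⁻¹ • rBell r k n a b else 0 := by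
  have hshift : egf a - C (a 0) = X * PowerSeries.mk fun j => ((j + 1)! : ℚ)⁻¹ • a (j + 1) := by
    simpa [egf] using sub_const_eq_X_mul_shift (egf a)
  ext n
  rw [hshift, mul_pow, mul_assoc, ← Fin.prod_ite_val_lt, coeff_mk, coeff_smul, coeff_X_pow_mul']
  split_ifs
  · simp only [egf, coeff_prod_fin, apply_ite (coeff _), coeff_mk, rBell, smul_smul]
    congr 1
    field_simp
  · exact smul_zero _

end Egf

/-- The `r`-Whitney numbers of the second kind as partial `r`-Bell polynomials:
`(1/k!)((e^{mt}-1)/m)^k e^{rt} = Σ_{n≥k} B^{(r)}_{n+r,k+r}(m^{l-1};1) t^n/n!`. -/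
theorem rWhitneySecond_eq_rBell (m : ℕ) (hm : 0 < m) (r k : ℕ) :
    ((k.factorial : ℚ))⁻¹ •
        (((m : ℚ)⁻¹ • ((PowerSeries.exp ℚ) ^ m - 1)) ^ k * (PowerSeries.exp ℚ) ^ r) =
      PowerSeries.mk fun n => if k ≤ n then
        ((n.factorial : ℚ))⁻¹ *
          rBell r k n (fun l => (m : ℚ) ^ (l - 1)) (fun _ => (1 : ℚ)) else 0 := by
  have h := egf_rBell r k (fun l => (m : ℚ) ^ (l - 1)) fun _ => 1
  simp only [Nat.zero_sub, pow_zero, map_one, smul_eq_mul, ← exp_eq_egf_one,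
    ← inv_smul_exp_pow_sub_one hm.ne'] at h
  exact h
end

section
/- Dobinski-type derivative formula for r-Whitney numbers of the second kind: for real a and positive integers m, r, d^n/da^n [ exp(e^{ma}/m + ra) ] = exp(e^{ma}/m + ra) · Σ_{k=0}^{n} W_{m,r}(n,k) e^{mak}, where W_{m,r}(n,k) are the r-Whitney numbers of the second kind. -/
/-!
With `f a = exp (e^{ma}/m + ra)` one has `f' = f · (e^{ma} + r)`, so by induction
`f⁽ⁿ⁾ a = f a · Pₙ(e^{ma})` for polynomials with `P₀ = 1` and
`Pₙ₊₁(y) = (y + r) Pₙ(y) + m y Pₙ'(y)`. On coefficients this is exactly the recurrence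
`W(n+1,k) = W(n,k-1) + (km + r) W(n,k)`, so `Pₙ(y) = Σₖ W_{m,r}(n,k) yᵏ`.
-/

open Finset

/-- The `r`-Whitney numbers of the second kind, via the recurrence
`W(n+1,k) = W(n,k-1) + (km+r) W(n,k)`, `W(0,0) = 1`. -/
noncomputable def rWhitney2 (m r : ℕ) : ℕ → ℕ → ℝ
  | 0, 0 => 1
  | 0, _ + 1 => 0
  | n + 1, 0 => (r : ℝ) * rWhitney2 m r n 0
  | n + 1, k + 1 => rWhitney2 m r n k + (((k : ℝ) + 1) * m + r) * rWhitney2 m r n (k + 1)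

lemma rWhitney2_eq_zero_of_lt (m r : ℕ) {n k : ℕ} (h : n < k) : rWhitney2 m r n k = 0 := by
  induction n generalizing k with
  | zero =>
    obtain ⟨k, rfl⟩ := Nat.exists_eq_add_of_lt h
    simp [rWhitney2]
  | succ n ih =>
    obtain ⟨k, rfl⟩ := Nat.exists_eq_add_of_lt (Nat.zero_lt_of_lt h)
    simp [rWhitney2, ih (k := k) (by omega), ih (k := k + 1) (by omega)]

lemma sum_rWhitney2_succ_mul_pow (m r n : ℕ) (y : ℝ) :
    ∑ k ∈ range (n + 2), rWhitney2 m r (n + 1) k * y ^ k =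
      ∑ k ∈ range (n + 1), rWhitney2 m r n k * (y + r + m * k) * y ^ k := by
  have hshift : ∑ k ∈ range (n + 1), rWhitney2 m r n k * (r + m * k) * y ^ k =
      ∑ k ∈ range (n + 1), ((k + 1) * m + r) * rWhitney2 m r n (k + 1) * y ^ (k + 1) +
        r * rWhitney2 m r n 0 := by
    have htop : rWhitney2 m r n (n + 1) * (r + m * (n + 1 : ℕ)) * y ^ (n + 1) = 0 := by
      rw [rWhitney2_eq_zero_of_lt m r n.lt_succ_self, zero_mul, zero_mul]
    rw [← add_zero (∑ k ∈ range (n + 1), _), ← htop, ← sum_range_succ, sum_range_succ']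
    congr 1
    · exact sum_congr rfl fun k _ ↦ by push_cast; ring
    · push_cast; ring
  have hsplit : ∑ k ∈ range (n + 1), rWhitney2 m r n k * (y + r + m * k) * y ^ k =
      ∑ k ∈ range (n + 1), rWhitney2 m r n k * y ^ (k + 1) +
        ∑ k ∈ range (n + 1), rWhitney2 m r n k * (r + m * k) * y ^ k := by
    rw [← sum_add_distrib]
    exact sum_congr rfl fun k _ ↦ by ring
  rw [hsplit, hshift, sum_range_succ']
  simp only [rWhitney2, add_mul, sum_add_distrib]
  ring

lemma iteratedDeriv_eq_mul_of_hasDerivAt {𝕜 : Type*} [NontriviallyNormedField 𝕜]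
    {f g : 𝕜 → 𝕜} {p : ℕ → 𝕜 → 𝕜} (hf : ∀ x, HasDerivAt f (f x * g x) x)
    (hp₀ : ∀ x, p 0 x = 1) (hp : ∀ n x, HasDerivAt (p n) (p (n + 1) x - g x * p n x) x)
    (n : ℕ) : iteratedDeriv n f = fun x ↦ f x * p n x := by
  induction n with
  | zero => simp [hp₀]
  | succ n ih =>
    rw [iteratedDeriv_succ, ih]
    funext x
    exact ((hf x).mul (hp n x)).deriv.trans (by ring)

lemma hasDerivAt_exp_exp_div_add_mul {m : ℝ} (hm : m ≠ 0) (r x : ℝ) :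
    HasDerivAt (fun x ↦ Real.exp (Real.exp (m * x) / m + r * x))
      (Real.exp (Real.exp (m * x) / m + r * x) * (Real.exp (m * x) + r)) x := by
  have hexp : HasDerivAt (fun x ↦ Real.exp (m * x) / m) (Real.exp (m * x)) x := by
    simpa [hm] using ((hasDerivAt_id' x).const_mul m).exp.div_const m
  have hlin : HasDerivAt (fun x ↦ r * x) r x := by simpa using (hasDerivAt_id' x).const_mul r
  exact (hexp.add hlin).exp

lemma hasDerivAt_sum_rWhitney2_mul_exp (m r n : ℕ) (x : ℝ) :
    HasDerivAt (fun x ↦ ∑ k ∈ range (n + 1), rWhitney2 m r n k * Real.exp (m * x * k))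
      (∑ k ∈ range (n + 2), rWhitney2 m r (n + 1) k * Real.exp (m * x * k) -
        (Real.exp (m * x) + r) * ∑ k ∈ range (n + 1), rWhitney2 m r n k * Real.exp (m * x * k))
      x := by
  have hpow (k : ℕ) : Real.exp (m * x * k) = Real.exp (m * x) ^ k := by
    rw [← Real.exp_nat_mul, mul_comm]
  refine (HasDerivAt.fun_sum fun (k : ℕ) _ ↦
    ((((hasDerivAt_id' x).const_mul (m : ℝ)).mul_const (k : ℝ)).exp.const_mul
      (rWhitney2 m r n k))).congr_deriv ?_
  simp only [hpow]
  rw [sum_rWhitney2_succ_mul_pow, mul_sum, ← sum_sub_distrib]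
  exact sum_congr rfl fun k _ ↦ by ring

theorem iteratedDeriv_exp_rWhitney_general (m r : ℕ) (hm : 0 < m) (n : ℕ) (a : ℝ) :
    iteratedDeriv n (fun x : ℝ => Real.exp (Real.exp (m * x) / m + r * x)) a =
      Real.exp (Real.exp (m * a) / m + r * a) *
        ∑ k ∈ Finset.range (n + 1), rWhitney2 m r n k * Real.exp (m * a * k) :=
  congrFun (iteratedDeriv_eq_mul_of_hasDerivAt
    (hasDerivAt_exp_exp_div_add_mul (Nat.cast_ne_zero.mpr hm.ne') r)
    (fun x ↦ by simp [rWhitney2]) (hasDerivAt_sum_rWhitney2_mul_exp m r) n) a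

/-- Dobinski-type derivative formula:
`dⁿ/daⁿ exp(e^{ma}/m + ra) = exp(e^{ma}/m + ra) Σ_{k=0}^{n} W_{m,r}(n,k) e^{mak}`. -/
theorem iteratedDeriv_exp_rWhitney (m r : ℕ) (hm : 0 < m) (hr : 0 < r) (n : ℕ) (a : ℝ) :
    iteratedDeriv n (fun x : ℝ => Real.exp (Real.exp (m * x) / m + r * x)) a =
      Real.exp (Real.exp (m * a) / m + r * a) *
        ∑ k ∈ Finset.range (n + 1), rWhitney2 m r n k * Real.exp (m * a * k) :=
  iteratedDeriv_exp_rWhitney_general m r hm n a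
end
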